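/- For the quotient Markov chain setup, the one-step transition probabilities of the projected stopped chain satisfy: for cells H_i ≠ H_{-1} and any H_j, P(π(η̄_{t+1}) = H_j | π(η̄_t) = H_i) = p^H(η, H_j) for any η ∈ H_i; and for H_i = H_{-1}, P(π(η̄_{t+1}) = H_j | π(η̄_t) = H_{-1}) = δ_{H_j, H_{-1}}. -/

import Mathlib

/-!
Split off the last step of every path: the weight of a path is the weight of its prefix times the
kernel entry of the last step, so the joint sum factors through the mass that the stopped kernel
sends from the prefix's endpoint into `H_j`. From a state of a cell `H_i ≠ H_{-1}` this mass is
`p^H(η, H_j) = q i j`; from a state of `H_{-1}` the stopped chain stays put, so it is `δ_{j,m}`.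
-/

open scoped BigOperators
open Finset

section PathSums

variable {H R : Type*} [CommSemiring R] {n : ℕ}

def pathWeight (k : H → H → R) (g : Fin (n + 1) → H) : R :=
  ∏ u : Fin n, k (g u.castSucc) (g u.succ)

theorem pathWeight_snoc (k : H → H → R) (g : Fin (n + 1) → H) (x : H) :
    pathWeight k (Fin.snoc g x : Fin (n + 2) → H) = pathWeight k g * k (g (Fin.last n)) x := by
  simp only [pathWeight, Fin.prod_univ_castSucc, Fin.succ_castSucc, Fin.snoc_castSucc,
    Fin.succ_last, Fin.snoc_last]

variable [Fintype H]

theorem sum_paths_eq_sum_sum_snoc (f : (Fin (n + 2) → H) → R) :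
    ∑ g, f g = ∑ g : Fin (n + 1) → H, ∑ x, f (Fin.snoc g x) := by
  rw [← (Fin.snocEquiv fun _ => H).sum_comp, Fintype.sum_prod_type_right]
  rfl

theorem sum_paths_last_step (k : H → H → R) (A : (Fin (n + 1) → H) → Prop) (B : H → Prop)
    [DecidablePred A] [DecidablePred B] {r : R}
    (hr : ∀ g, A g → ∑ x, (if B x then k (g (Fin.last n)) x else 0) = r) :
    ∑ g : Fin (n + 2) → H,
        (if A (Fin.init g) ∧ B (g (Fin.last _)) then pathWeight k g else 0) =
      r * ∑ g, if A g then pathWeight k g else 0 := by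
  rw [sum_paths_eq_sum_sum_snoc, mul_sum]
  refine sum_congr rfl fun g _ => ?_
  simp only [Fin.init_snoc, Fin.snoc_last, pathWeight_snoc]
  by_cases hA : A g
  · simp only [hA, true_and, if_true, ← hr g hA, sum_mul]
    refine sum_congr rfl fun x _ => ?_
    split_ifs <;> simp [mul_comm]
  · simp [hA]

end PathSums

section StoppedKernel

variable {H S R : Type*} [Fintype H] [DecidableEq H] [DecidableEq S] [Semiring R]
  (π : H → S) (m : S) (p pbar : H → H → R)
  (hpbar : ∀ a b, pbar a b = if π a = m then (if b = a then 1 else 0) else p a b)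
include hpbar

theorem sum_cell_stopped_of_mem {a : H} (ha : π a = m) (j : S) :
    ∑ c, (if π c = j then pbar a c else 0) = if j = m then 1 else 0 := by
  simp only [hpbar, ha, if_true]
  rw [Fintype.sum_eq_single a fun c hc => by simp [hc]]
  simp [ha, eq_comm]

theorem sum_cell_stopped_of_not_mem {a : H} (ha : π a ≠ m) (j : S) :
    ∑ c, (if π c = j then pbar a c else 0) = ∑ c, if π c = j then p a c else 0 := by
  simp only [hpbar, ha, if_false]

end StoppedKernel

/-- One-step transition probabilities of the projected stopped chain.  With `pbar` the kernel of
the chain stopped upon hitting `π⁻¹(m)` and path probabilities computed from initial state `η₀`,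
the joint probability `P(π(η̄_{t+1}) = j, π(η̄_t) = i)` equals `q i j` times the marginal
probability `P(π(η̄_t) = i)`, where `q i j = p^H(η, H_j)` for any `η ∈ H_i` when `i ≠ m`, and
`q m j = δ_{j,m}`.  In other words, `P(π(η̄_{t+1}) = H_j | π(η̄_t) = H_i) = p^H(η, H_j)` for
`H_i ≠ H_{-1}`, and `= δ_{H_j, H_{-1}}` for `H_i = H_{-1}`. -/
theorem projected_stopped_chain_one_step
    {H S : Type*} [Fintype H] [DecidableEq H] [DecidableEq S]
    (π : H → S) (m : S)
    (p : H → H → ℝ)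
    (q : S → S → ℝ)
    (hq : ∀ i, i ≠ m → ∀ a, π a = i → ∀ j, q i j = ∑ c, if π c = j then p a c else 0)
    (hqm : ∀ j, q m j = if j = m then 1 else 0)
    (η₀ : H)
    (pbar : H → H → ℝ)
    (hpbar : ∀ a b, pbar a b = if π a = m then (if b = a then 1 else 0) else p a b)
    (t : ℕ) (i j : S) :
    (∑ g : Fin (t + 2) → H,
        (if g 0 = η₀ ∧ π (g ⟨t, by omega⟩) = i ∧ π (g ⟨t + 1, by omega⟩) = j then
          ∏ u : Fin (t + 1), pbar (g u.castSucc) (g u.succ) else 0)) =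
      q i j *
        ∑ g : Fin (t + 1) → H,
          (if g 0 = η₀ ∧ π (g ⟨t, by omega⟩) = i then
            ∏ u : Fin t, pbar (g u.castSucc) (g u.succ) else 0) := by
  have hcell : ∀ a, π a = i → ∑ c, (if π c = j then pbar a c else 0) = q i j := by
    rintro a rfl
    by_cases ha : π a = m
    · rw [sum_cell_stopped_of_mem π m p pbar hpbar ha, ha, hqm]
    · rw [sum_cell_stopped_of_not_mem π m p pbar hpbar ha, hq _ ha a rfl]
  simp only [← and_assoc]
  -- `Fin.init g 0`, `Fin.init g (Fin.last t)`, `g (Fin.last _)` unfold to the indices above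
  exact sum_paths_last_step pbar (fun g => g 0 = η₀ ∧ π (g (Fin.last t)) = i) (π · = j)
    fun g hg => hcell _ hg.2
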